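/- Under the hypotheses of the previous statement (k ∈ [0,1), |G(ξ)-G(η)| ≤ k ρ₂(ξ,η), M(s) = (x(s)-y(s)) + (G(y_s)-G(x_s))), one has ∫₀ᵗ e^{-λs} |x(s)-y(s)|² ds ≤ (1/(1-k)²) ∫₀ᵗ e^{-λs} |M(s)|² ds + (kτ/(1-k)) ρ₂(x₀, y₀)². -/

import Mathlib

open MeasureTheory

noncomputable def rho2 {d : ℕ} (τ : ℝ) (ξ η : C(Set.Icc (-τ) (0:ℝ), EuclideanSpace ℝ (Fin d))) : ℝ :=
  Real.sqrt ((1 / τ) * ∫ θ : Set.Icc (-τ) (0:ℝ), ‖ξ θ - η θ‖ ^ 2 ∂(MeasureTheory.volume.comap Subtype.val))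

noncomputable def pathSegment {d : ℕ} (τ : ℝ) (x : ℝ → EuclideanSpace ℝ (Fin d)) (hx : Continuous x)
    (s : ℝ) : C(Set.Icc (-τ) (0:ℝ), EuclideanSpace ℝ (Fin d)) :=
  ContinuousMap.mk (fun θ : Set.Icc (-τ) (0:ℝ) => x (s + θ))
    (hx.comp (continuous_const.add continuous_subtype_val))

/-!
Because `G` is a `k`-contraction for `ρ₂`, `|x(s) - y(s)| ≤ |M(s)| + k ρ₂(x_s, y_s)`, and convexity
of the square turns this into `|x - y|² ≤ |M|² / (1 - k) + k ρ₂(x_s, y_s)²`. By Fubini, the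
weighted integral of `ρ₂(x_s, y_s)²` over `[0, t]` is an average over `u ∈ [-τ, 0]` of
`∫₀ᵗ e^{-λs} |x - y|²(s + u) ds`. Substituting `v = s + u`, the weight `e^{-λ(v - u)}` is at most
both `1` and `e^{-λv}`, and `[u, t + u] ⊆ [-τ, 0] ∪ [0, t]`, so each of these is at most
`τ ρ₂(x₀, y₀)² + ∫₀ᵗ e^{-λs} |x - y|²`. Since `k < 1`, the resulting multiple of the left-hand
side can be absorbed.
-/

open Set Real

lemma sq_le_inv_one_sub_mul_sq_add_mul_sq {a b c k : ℝ} (ha : 0 ≤ a) (hk0 : 0 ≤ k) (hk1 : k < 1)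
    (h : a ≤ b + k * c) : a ^ 2 ≤ (1 - k)⁻¹ * b ^ 2 + k * c ^ 2 := by
  have h1k : 0 < 1 - k := by linarith
  -- convexity of the square: `b + k c = (1 - k) (b / (1 - k)) + k c`
  have hconv : (b + k * c) ^ 2 ≤ (1 - k)⁻¹ * b ^ 2 + k * c ^ 2 := by
    rw [← sub_nonneg]
    have key : (1 - k)⁻¹ * b ^ 2 + k * c ^ 2 - (b + k * c) ^ 2
        = k * (1 - k)⁻¹ * (b - (1 - k) * c) ^ 2 := by
      field_simp; ring
    rw [key]; positivity
  nlinarith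

lemma setIntegral_Icc_comp_add_right {E : Type*} [NormedAddCommGroup E] [NormedSpace ℝ E]
    (g : ℝ → E) (a b u : ℝ) :
    ∫ s in Icc a b, g (s + u) = ∫ v in Icc (a + u) (b + u), g v := by
  rw [← (measurePreserving_add_right volume u).setIntegral_preimage_emb
    (measurableEmbedding_addRight u) g, preimage_add_const_Icc, add_sub_cancel_right,
    add_sub_cancel_right]

section ShiftedIntegral

variable {f : ℝ → ℝ} {lam τ t : ℝ}

lemma setIntegral_exp_mul_comp_add_le (hf : Continuous f) (hf0 : ∀ v, 0 ≤ f v) (hlam : 0 ≤ lam)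
    {u : ℝ} (hu : u ∈ Icc (-τ) 0) :
    ∫ s in Icc 0 t, exp (-lam * s) * f (s + u)
      ≤ (∫ v in Icc (-τ) 0, f v) + ∫ v in Icc 0 t, exp (-lam * v) * f v := by
  set g : ℝ → ℝ := fun v => exp (-lam * (v - u)) * f v
  have hgc : Continuous g := by fun_prop
  have hg0 : 0 ≤ g := fun v => mul_nonneg (exp_pos _).le (hf0 v)
  have hsub : Icc u (t + u) ⊆ Icc u 0 ∪ Ioc 0 t := fun v hv => by
    rcases le_or_gt v 0 with h | h
    · exact Or.inl ⟨hv.1, h⟩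
    · exact Or.inr ⟨h, by linarith [hv.2, hu.2]⟩
  have hleft : ∫ v in Icc u 0, g v ≤ ∫ v in Icc (-τ) 0, f v := by
    refine (setIntegral_mono_on hgc.integrableOn_Icc hf.integrableOn_Icc measurableSet_Icc
      fun v hv => ?_).trans (setIntegral_mono_set hf.integrableOn_Icc (.of_forall hf0)
        (Icc_subset_Icc_left hu.1).eventuallyLE)
    refine mul_le_of_le_one_left (hf0 v) (exp_le_one_iff.2 ?_)
    nlinarith [hv.1]
  have hright : ∫ v in Ioc 0 t, g v ≤ ∫ v in Icc 0 t, exp (-lam * v) * f v := by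
    rw [integral_Icc_eq_integral_Ioc]
    refine setIntegral_mono_on hgc.integrableOn_Ioc (by fun_prop : Continuous _).integrableOn_Ioc
      measurableSet_Ioc fun v _ => ?_
    exact mul_le_mul_of_nonneg_right (exp_le_exp.2 (by nlinarith [hu.2])) (hf0 v)
  calc ∫ s in Icc 0 t, exp (-lam * s) * f (s + u)
      = ∫ v in Icc (0 + u) (t + u), g v := by
        rw [← setIntegral_Icc_comp_add_right]
        simp only [g, add_sub_cancel_right]
    _ ≤ ∫ v in Icc u 0 ∪ Ioc 0 t, g v := by
        rw [zero_add]
        exact setIntegral_mono_set (hgc.integrableOn_Icc.union hgc.integrableOn_Ioc)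
          (.of_forall hg0) hsub.eventuallyLE
    _ = (∫ v in Icc u 0, g v) + ∫ v in Ioc 0 t, g v :=
        setIntegral_union (disjoint_left.2 fun v h₁ h₂ => h₁.2.not_gt h₂.1) measurableSet_Ioc
          hgc.integrableOn_Icc hgc.integrableOn_Ioc
    _ ≤ _ := add_le_add hleft hright

lemma setIntegral_exp_mul_integral_comp_add_le (hf : Continuous f) (hf0 : ∀ v, 0 ≤ f v)
    (hlam : 0 ≤ lam) (hτ : 0 ≤ τ) :
    ∫ s in Icc 0 t, exp (-lam * s) * ∫ u in Icc (-τ) 0, f (s + u)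
      ≤ τ * ((∫ v in Icc (-τ) 0, f v) + ∫ v in Icc 0 t, exp (-lam * v) * f v) := by
  set F : ℝ → ℝ → ℝ := fun s u => exp (-lam * s) * f (s + u)
  have hF : Integrable (Function.uncurry F)
      ((volume.restrict (Icc 0 t)).prod (volume.restrict (Icc (-τ) 0))) := by
    rw [Measure.prod_restrict]
    exact (by fun_prop : Continuous (Function.uncurry F)).continuousOn.integrableOn_compact
      (isCompact_Icc.prod isCompact_Icc)
  calc ∫ s in Icc 0 t, exp (-lam * s) * ∫ u in Icc (-τ) 0, f (s + u)
      = ∫ u in Icc (-τ) 0, ∫ s in Icc 0 t, F s u := by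
        simp_rw [F, ← integral_const_mul]
        exact integral_integral_swap hF
    _ ≤ ∫ _ in Icc (-τ) 0, ((∫ v in Icc (-τ) 0, f v) + ∫ v in Icc 0 t, exp (-lam * v) * f v) :=
        setIntegral_mono_on hF.integral_prod_right (integrableOn_const measure_Icc_lt_top.ne)
          measurableSet_Icc fun u hu => setIntegral_exp_mul_comp_add_le hf hf0 hlam hu
    _ = _ := by
        rw [setIntegral_const, smul_eq_mul, volume_real_Icc_of_le (by linarith), sub_neg_eq_add,
          zero_add]

end ShiftedIntegral

section Rho2

variable {d : ℕ} {τ : ℝ}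

lemma rho2_sq_pathSegment (hτ : 0 ≤ τ) {x y : ℝ → EuclideanSpace ℝ (Fin d)} (hx : Continuous x)
    (hy : Continuous y) (s : ℝ) :
    rho2 τ (pathSegment τ x hx s) (pathSegment τ y hy s) ^ 2
      = τ⁻¹ * ∫ u in Icc (-τ) 0, ‖x (s + u) - y (s + u)‖ ^ 2 := by
  rw [rho2, one_div,
    ← integral_subtype_comap measurableSet_Icc (fun u => ‖x (s + u) - y (s + u)‖ ^ 2), sq_sqrt]
  · rfl
  · exact mul_nonneg (inv_nonneg.2 hτ) (integral_nonneg fun _ => by positivity)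

lemma rho2_le_dist (hτ : 0 < τ) (ξ η : C(Icc (-τ) (0:ℝ), EuclideanSpace ℝ (Fin d))) :
    rho2 τ ξ η ≤ dist ξ η := by
  set μ := volume.comap (Subtype.val : Icc (-τ) (0:ℝ) → ℝ)
  have hμ : μ univ = ENNReal.ofReal τ := by
    rw [MeasurableEmbedding.comap_apply (.subtype_coe measurableSet_Icc), image_univ,
      Subtype.range_coe, Real.volume_Icc, zero_sub, neg_neg]
  have : IsFiniteMeasure μ := ⟨hμ ▸ ENNReal.ofReal_lt_top⟩
  have hbound : ∀ θ, ‖‖ξ θ - η θ‖ ^ 2‖ ≤ dist ξ η ^ 2 := fun θ => by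
    rw [Real.norm_of_nonneg (by positivity), ← dist_eq_norm]
    exact pow_le_pow_left₀ dist_nonneg (ContinuousMap.dist_apply_le_dist θ) 2
  have hint : ∫ θ, ‖ξ θ - η θ‖ ^ 2 ∂μ ≤ dist ξ η ^ 2 * τ :=
    calc _ ≤ ‖∫ θ, ‖ξ θ - η θ‖ ^ 2 ∂μ‖ := Real.le_norm_self _
      _ ≤ dist ξ η ^ 2 * μ.real univ := norm_integral_le_of_norm_le_const (.of_forall hbound)
      _ = dist ξ η ^ 2 * τ := by rw [measureReal_def, hμ, ENNReal.toReal_ofReal hτ.le]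
  rw [rho2, ← sqrt_sq dist_nonneg]
  refine sqrt_le_sqrt ?_
  calc 1 / τ * ∫ θ, ‖ξ θ - η θ‖ ^ 2 ∂μ ≤ 1 / τ * (dist ξ η ^ 2 * τ) := by gcongr
    _ = dist ξ η ^ 2 := by field_simp

lemma lipschitzWith_of_norm_sub_le_mul_rho2 (hτ : 0 < τ) {k : ℝ} (hk : 0 ≤ k)
    {G : C(Icc (-τ) (0:ℝ), EuclideanSpace ℝ (Fin d)) → EuclideanSpace ℝ (Fin d)}
    (hG : ∀ ξ η, ‖G ξ - G η‖ ≤ k * rho2 τ ξ η) : LipschitzWith ⟨k, hk⟩ G :=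
  .of_dist_le_mul fun ξ η => by
    rw [dist_eq_norm]
    exact (hG ξ η).trans (mul_le_mul_of_nonneg_left (rho2_le_dist hτ ξ η) hk)

lemma continuous_pathSegment {x : ℝ → EuclideanSpace ℝ (Fin d)} (hx : Continuous x) :
    Continuous (pathSegment τ x hx) :=
  (ContinuousMap.curry ⟨fun p : ℝ × Icc (-τ) (0:ℝ) => x (p.1 + p.2), by fun_prop⟩).continuous

lemma continuous_rho2_pathSegment (hτ : 0 ≤ τ) {x y : ℝ → EuclideanSpace ℝ (Fin d)}
    (hx : Continuous x) (hy : Continuous y) :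
    Continuous fun s => rho2 τ (pathSegment τ x hx s) (pathSegment τ y hy s) := by
  have hsq : Continuous fun s => rho2 τ (pathSegment τ x hx s) (pathSegment τ y hy s) ^ 2 := by
    simp_rw [rho2_sq_pathSegment hτ hx hy]
    exact continuous_const.mul
      (continuous_parametric_integral_of_continuous (by fun_prop) isCompact_Icc)
  convert hsq.sqrt using 2 with s
  exact (sqrt_sq (sqrt_nonneg _)).symm

lemma setIntegral_exp_mul_rho2_sq_le (hτ : 0 < τ) {lam : ℝ} (hlam : 0 ≤ lam) (t : ℝ)
    {x y : ℝ → EuclideanSpace ℝ (Fin d)} (hx : Continuous x) (hy : Continuous y) :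
    ∫ s in Icc 0 t, exp (-lam * s) * rho2 τ (pathSegment τ x hx s) (pathSegment τ y hy s) ^ 2
      ≤ τ * rho2 τ (pathSegment τ x hx 0) (pathSegment τ y hy 0) ^ 2
        + ∫ s in Icc 0 t, exp (-lam * s) * ‖x s - y s‖ ^ 2 := by
  have h := setIntegral_exp_mul_integral_comp_add_le (t := t)
    (by fun_prop : Continuous fun v => ‖x v - y v‖ ^ 2) (fun v => sq_nonneg _) hlam hτ.le
  simp only [rho2_sq_pathSegment hτ.le hx hy, zero_add, mul_left_comm (exp _) τ⁻¹,
    integral_const_mul, mul_inv_cancel_left₀ hτ.ne']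
  calc _ ≤ τ⁻¹ * (τ * _) := mul_le_mul_of_nonneg_left h (inv_nonneg.2 hτ.le)
    _ = _ := by rw [inv_mul_cancel_left₀ hτ.ne']

lemma norm_sub_sq_le_of_norm_sub_le_mul_rho2 {k : ℝ} (hk0 : 0 ≤ k) (hk1 : k < 1)
    {G : C(Icc (-τ) (0:ℝ), EuclideanSpace ℝ (Fin d)) → EuclideanSpace ℝ (Fin d)}
    (hG : ∀ ξ η, ‖G ξ - G η‖ ≤ k * rho2 τ ξ η) {x y : ℝ → EuclideanSpace ℝ (Fin d)}
    (hx : Continuous x) (hy : Continuous y) (s : ℝ) :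
    ‖x s - y s‖ ^ 2
      ≤ (1 - k)⁻¹ * ‖(x s - y s) + (G (pathSegment τ y hy s) - G (pathSegment τ x hx s))‖ ^ 2
        + k * rho2 τ (pathSegment τ x hx s) (pathSegment τ y hy s) ^ 2 := by
  refine sq_le_inv_one_sub_mul_sq_add_mul_sq (norm_nonneg _) hk0 hk1 ?_
  calc ‖x s - y s‖
      = ‖(x s - y s) + (G (pathSegment τ y hy s) - G (pathSegment τ x hx s))
          + (G (pathSegment τ x hx s) - G (pathSegment τ y hy s))‖ := by abel_nf
    _ ≤ _ := (norm_add_le _ _).trans (add_le_add le_rfl (hG _ _))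

end Rho2

lemma le_inv_one_sub_sq_mul_add_of_le_add {I J K c k : ℝ} (hk0 : 0 ≤ k) (hk1 : k < 1)
    (hI : I ≤ (1 - k)⁻¹ * J + k * K) (hK : K ≤ c + I) :
    I ≤ 1 / (1 - k) ^ 2 * J + k / (1 - k) * c := by
  have h1k : 0 < 1 - k := sub_pos.2 hk1
  have hI' : (1 - k) * I ≤ (1 - k)⁻¹ * J + k * c := by nlinarith
  calc I = (1 - k)⁻¹ * ((1 - k) * I) := by field_simp
    _ ≤ (1 - k)⁻¹ * ((1 - k)⁻¹ * J + k * c) := by gcongr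
    _ = _ := by field_simp

theorem lemma30_3_general (τ lam t : ℝ) (hτ : 0 < τ) (hlam : 0 ≤ lam) (d : ℕ)
    (k : ℝ) (hk0 : 0 ≤ k) (hk1 : k < 1)
    (G : C(Set.Icc (-τ) (0:ℝ), EuclideanSpace ℝ (Fin d)) → EuclideanSpace ℝ (Fin d))
    (hG : ∀ ξ η, ‖G ξ - G η‖ ≤ k * rho2 τ ξ η)
    (x y : ℝ → EuclideanSpace ℝ (Fin d)) (hx : Continuous x) (hy : Continuous y)
    (M : ℝ → EuclideanSpace ℝ (Fin d))
    (hM : ∀ s, M s = (x s - y s) + (G (pathSegment τ y hy s) - G (pathSegment τ x hx s))) :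
    (∫ s in Set.Icc (0:ℝ) t, Real.exp (-lam * s) * ‖x s - y s‖ ^ 2)
      ≤ (1 / (1 - k) ^ 2) * (∫ s in Set.Icc (0:ℝ) t, Real.exp (-lam * s) * ‖M s‖ ^ 2)
        + (k * τ / (1 - k)) * (rho2 τ (pathSegment τ x hx 0) (pathSegment τ y hy 0)) ^ 2 := by
  set r : ℝ → ℝ := fun s => rho2 τ (pathSegment τ x hx s) (pathSegment τ y hy s)
  have hrc : Continuous r := continuous_rho2_pathSegment hτ.le hx hy
  have hMc : Continuous M := by
    have hGc := (lipschitzWith_of_norm_sub_le_mul_rho2 hτ hk0 hG).continuous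
    have hxc := continuous_pathSegment (τ := τ) hx
    have hyc := continuous_pathSegment (τ := τ) hy
    rw [funext hM]
    fun_prop
  have hA : ∫ s in Icc 0 t, exp (-lam * s) * ‖x s - y s‖ ^ 2
      ≤ (1 - k)⁻¹ * (∫ s in Icc 0 t, exp (-lam * s) * ‖M s‖ ^ 2)
        + k * ∫ s in Icc 0 t, exp (-lam * s) * r s ^ 2 := by
    rw [← integral_const_mul, ← integral_const_mul,
      ← integral_add ((by fun_prop : Continuous _).integrableOn_Icc)
        ((by fun_prop : Continuous _).integrableOn_Icc)]
    refine setIntegral_mono_on (by fun_prop : Continuous _).integrableOn_Icc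
      ((by fun_prop : Continuous _).integrableOn_Icc) measurableSet_Icc fun s _ => ?_
    have := mul_le_mul_of_nonneg_left (norm_sub_sq_le_of_norm_sub_le_mul_rho2 hk0 hk1 hG hx hy s)
      (exp_pos (-lam * s)).le
    rw [← hM] at this
    linarith
  have hB := setIntegral_exp_mul_rho2_sq_le hτ hlam t hx hy
  calc _ ≤ 1 / (1 - k) ^ 2 * _ + k / (1 - k) * (τ * r 0 ^ 2) :=
        le_inv_one_sub_sq_mul_add_of_le_add hk0 hk1 hA hB
    _ = _ := by ring

theorem lemma30_3 (τ lam t : ℝ) (hτ : 0 < τ) (hlam : 0 ≤ lam) (ht : 0 < t) (d : ℕ)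
    (k : ℝ) (hk0 : 0 ≤ k) (hk1 : k < 1)
    (G : C(Set.Icc (-τ) (0:ℝ), EuclideanSpace ℝ (Fin d)) → EuclideanSpace ℝ (Fin d))
    (hG : ∀ ξ η, ‖G ξ - G η‖ ≤ k * rho2 τ ξ η)
    (x y : ℝ → EuclideanSpace ℝ (Fin d)) (hx : Continuous x) (hy : Continuous y)
    (M : ℝ → EuclideanSpace ℝ (Fin d))
    (hM : ∀ s, M s = (x s - y s) + (G (pathSegment τ y hy s) - G (pathSegment τ x hx s))) :
    (∫ s in Set.Icc (0:ℝ) t, Real.exp (-lam * s) * ‖x s - y s‖ ^ 2)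
      ≤ (1 / (1 - k) ^ 2) * (∫ s in Set.Icc (0:ℝ) t, Real.exp (-lam * s) * ‖M s‖ ^ 2)
        + (k * τ / (1 - k)) * (rho2 τ (pathSegment τ x hx 0) (pathSegment τ y hy 0)) ^ 2 :=
  lemma30_3_general τ lam t hτ hlam d k hk0 hk1 G hG x y hx hy M hM
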